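/- arXiv:0806.0914 — 2 statements merged into one kernel-verified Lean document; each statement's English description precedes it below -/
import Mathlib

section
/- Monotonicity of φ̄_∞ under domination. Let k ≥ 2 and let (α,β), (α′,β′) satisfy α, α′ ∈ [0,1], β, β′ ≥ 1, α+β−k+1 ∈ [0,1] and α′+β′−k+1 ∈ [0,1]. Suppose φ̄^{α,β}(t) ≥ φ̄^{α′,β′}(t) for all t ∈ [0,k], with strict inequality for at least one s ∈ [0,k] (φ̄^{α,β} dominates φ̄^{α′,β′}). Then φ̄_∞^{α,β}(x) ≥ φ̄_∞^{α′,β′}(x) for every x ∈ A^ℕ, and this inequality is strict whenever 0 < φ̄_∞^{α,β}(x) < 1 or 0 < φ̄_∞^{α′,β′}(x) < 1. -/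
/-!
Since `φ̄^{α,β}` is monotone with values in `[0,1]`, the iterates `φ̄ₙ` increase to `φ̄_∞`, and
domination on `[0,k]` passes by induction from `φ̄^{α,β}` to every `φ̄ₙ` and then to the limit.
By continuity `φ̄_∞(x) = φ̄(x₀ + φ̄_∞(σx))`, so strictness reduces to a single application of
`φ̄`. There it comes from rigidity: if two clamped affine maps are ordered near `t`, agree at `t`
and take a value in `(0,1)` there, both are affine with the same value at an interior minimum of
their difference, hence have the same slope and intercept and coincide everywhere, which the
strict inequality at `s` forbids.
-/

open Filter Set

/-- The shift map on one-sided sequences. -/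
def shft (x : ℕ → ℕ) : ℕ → ℕ := fun n => x (n + 1)

/-- Strict lexicographic order on one-sided sequences:
`x ≺ y` iff they differ and `x m < y m` at the first index `m` where they differ. -/
def lexLt (x y : ℕ → ℕ) : Prop := ∃ m, (∀ i, i < m → x i = y i) ∧ x m < y m

/-- Lexicographic order `x ≼ y` on one-sided sequences. -/
def lexLe (x y : ℕ → ℕ) : Prop := x = y ∨ lexLt x y

/-- The map `φ̄^{α,β} : ℝ → [0,1]`:  `0` for `t ≤ α`, `(t-α)/β` for `α ≤ t ≤ α+β`,
`1` for `t ≥ α+β`. -/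
noncomputable def phiB (α β t : ℝ) : ℝ :=
  if t ≤ α then 0 else if α + β ≤ t then 1 else (t - α) / β

/-- `φ̄ₙ^{α,β}(x) = φ̄^{α,β}(x₀ + φ̄^{α,β}(x₁ + ⋯ + φ̄^{α,β}(x_{n-1})⋯))`. -/
noncomputable def phiBN (α β : ℝ) : ℕ → (ℕ → ℕ) → ℝ
  | 0, _ => 0
  | n + 1, x => phiB α β (x 0 + phiBN α β n (shft x))

/-- `φ̄_∞^{α,β}(x) = limₙ φ̄ₙ^{α,β}(x)`; the sequence `φ̄ₙ^{α,β}(x)` is nondecreasing in `n`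
and bounded, so its limit is its supremum. -/
noncomputable def phiBInf (α β : ℝ) (x : ℕ → ℕ) : ℝ := ⨆ n, phiBN α β n x

/-- `T̂_{α,β}(x) = βx + α − ⌊βx + α⌋`. -/
noncomputable def Tlow (α β x : ℝ) : ℝ := β * x + α - ⌊β * x + α⌋

/-- `Ť_{α,β}(x) = βx + α + 1 − ⌈βx + α⌉`. -/
noncomputable def Thigh (α β x : ℝ) : ℝ := β * x + α + 1 - ⌈β * x + α⌉

/-- `k = ⌈α + β⌉`, the size of the alphabet `A = {0, …, k-1}`. -/
noncomputable def kAB (α β : ℝ) : ℕ := (⌈α + β⌉).toNat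

/-- The string `u^{α,β}`, the coding of the orbit of `0`:
`u^{α,β}ₙ = ⌊β T̂ⁿ_{α,β}(0) + α⌋`. -/
noncomputable def uItin (α β : ℝ) : ℕ → ℕ := fun n => (⌊β * (Tlow α β)^[n] 0 + α⌋).toNat

/-- The string `v^{α,β}`, the coding of the orbit of `1`:
`v^{α,β}ₙ = ⌈β Ťⁿ_{α,β}(1) + α⌉ − 1`. -/
noncomputable def vItin (α β : ℝ) : ℕ → ℕ := fun n => (⌈β * (Thigh α β)^[n] 1 + α⌉ - 1).toNat

/-- The shift space `Σ(u,v) = {x ∈ A^ℕ : u ≼ σⁿx ≼ v for all n ≥ 0}`, `A = {0,…,k-1}`. -/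
def SigSet (k : ℕ) (u v : ℕ → ℕ) : Set (ℕ → ℕ) :=
  {x | (∀ i, x i < k) ∧ ∀ n, lexLe u (shft^[n] x) ∧ lexLe (shft^[n] x) v}

/-- The number of words of length `n` in the language of `Σ(u,v)` (prefixes of elements). -/
noncomputable def nWords (k : ℕ) (u v : ℕ → ℕ) (n : ℕ) : ℕ :=
  Nat.card {w : Fin n → ℕ // ∃ x ∈ SigSet k u v, ∀ i : Fin n, x i.1 = w i}

/-- The topological entropy (base 2) of `Σ(u,v)`:
`h = limₙ (1/n) log₂ card(Lₙ)` (the limit exists by subadditivity, so it equals the limsup;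
it is `0` when `Σ(u,v) = ∅`). -/
noncomputable def entS (k : ℕ) (u v : ℕ → ℕ) : ℝ :=
  Filter.limsup (fun n : ℕ => Real.logb 2 (nWords k u v n) / (n : ℝ)) Filter.atTop

/-- Concatenation of the word `w₀ ⋯ w_{p-1}` (the first `p` letters of `w`) with the
string `y`. -/
def wcat (p : ℕ) (w y : ℕ → ℕ) : ℕ → ℕ := fun n => if n < p then w n else y (n - p)

open Topology

section phiB

variable {α β α' β' : ℝ}

lemma phiB_eq_min_max (hβ : 0 < β) (t : ℝ) : phiB α β t = min 1 (max 0 ((t - α) / β)) := by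
  unfold phiB
  split_ifs with h₁ h₂
  · rw [max_eq_left (div_nonpos_of_nonpos_of_nonneg (by linarith) hβ.le), min_eq_right zero_le_one]
  · rw [min_eq_left (((one_le_div hβ).2 (by linarith)).trans (le_max_right _ _))]
  · have hlt : (t - α) / β < 1 := (div_lt_one hβ).2 (by linarith)
    rw [max_eq_right (div_pos (by linarith) hβ).le, min_eq_right hlt.le]

lemma phiB_monotone (hβ : 0 < β) : Monotone (phiB α β) := by
  intro s t hst
  rw [phiB_eq_min_max hβ, phiB_eq_min_max hβ]
  gcongr

lemma continuous_phiB (hβ : 0 < β) : Continuous (phiB α β) := by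
  rw [funext (phiB_eq_min_max hβ)]
  fun_prop

lemma phiB_mem_Icc (hβ : 0 < β) (t : ℝ) : phiB α β t ∈ Icc 0 1 := by
  rw [phiB_eq_min_max hβ]
  exact ⟨le_min zero_le_one (le_max_left _ _), min_le_left _ _⟩

lemma phiB_of_mem_Ioo {t : ℝ} (ht : t ∈ Ioo α (α + β)) : phiB α β t = (t - α) / β := by
  simp only [phiB, if_neg (not_le.2 ht.1), if_neg (not_le.2 ht.2)]

lemma mem_Ioo_of_phiB_mem_Ioo {t : ℝ} (h : phiB α β t ∈ Ioo 0 1) : t ∈ Ioo α (α + β) := by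
  unfold phiB at h
  split_ifs at h with h₁ h₂
  · exact absurd h.1 (lt_irrefl 0)
  · exact absurd h.2 (lt_irrefl 1)
  · exact ⟨not_le.1 h₁, not_le.1 h₂⟩

lemma params_eq_of_phiB_le_of_phiB_eq (hβ : 0 < β) (hβ' : 0 < β') {t : ℝ}
    (hle : ∀ᶠ s in 𝓝 t, phiB α' β' s ≤ phiB α β s) (heq : phiB α' β' t = phiB α β t)
    (hmem : phiB α β t ∈ Ioo 0 1) : α' = α ∧ β' = β := by
  have ht := mem_Ioo_of_phiB_mem_Ioo hmem
  have ht' := mem_Ioo_of_phiB_mem_Ioo (heq ▸ hmem)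
  have hdiv : ∀ᶠ s in 𝓝 t, (s - α') * β ≤ (s - α) * β' := by
    filter_upwards [hle, isOpen_Ioo.mem_nhds ht, isOpen_Ioo.mem_nhds ht'] with s hs hsI hsI'
    rwa [phiB_of_mem_Ioo hsI, phiB_of_mem_Ioo hsI', div_le_div_iff₀ hβ' hβ] at hs
  obtain ⟨ε, hε, hball⟩ := Metric.eventually_nhds_iff.1 hdiv
  have hright := hball (y := t + ε / 2) (by rw [Real.dist_eq, abs_of_pos] <;> linarith)
  have hleft := hball (y := t - ε / 2) (by rw [Real.dist_eq, abs_of_neg] <;> linarith)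
  have hcenter : (t - α') * β = (t - α) * β' := by
    rwa [phiB_of_mem_Ioo ht, phiB_of_mem_Ioo ht', div_eq_div_iff hβ'.ne' hβ.ne'] at heq
  -- an affine function vanishing at `t` and `≥ 0` at `t ± ε/2` has slope zero
  have hβeq : β' = β := by nlinarith
  subst hβeq
  exact ⟨by nlinarith, rfl⟩

lemma phiB_lt_phiB_of_dominates {k : ℝ} (h0α : 0 ≤ α) (hαk : α + β ≤ k) (hβ : 0 < β)
    (hβ' : 0 < β') (hdom : ∀ t ∈ Icc 0 k, phiB α' β' t ≤ phiB α β t)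
    (hstrict : ∃ s ∈ Icc 0 k, phiB α' β' s < phiB α β s) {t : ℝ} (ht : t ∈ Icc 0 k)
    (hmem : phiB α β t ∈ Ioo 0 1 ∨ phiB α' β' t ∈ Ioo 0 1) : phiB α' β' t < phiB α β t := by
  refine (hdom t ht).lt_of_ne fun heq => ?_
  have hval : phiB α β t ∈ Ioo 0 1 := hmem.elim id (heq ▸ ·)
  have htI := mem_Ioo_of_phiB_mem_Ioo hval
  have hnhds : Icc (0 : ℝ) k ∈ 𝓝 t := Icc_mem_nhds (by linarith [htI.1]) (by linarith [htI.2])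
  obtain ⟨rfl, rfl⟩ := params_eq_of_phiB_le_of_phiB_eq hβ hβ' (mem_of_superset hnhds hdom) heq hval
  obtain ⟨s, -, hs⟩ := hstrict
  exact lt_irrefl _ hs

end phiB

lemma natCast_add_mem_Icc {n k : ℕ} (hn : n < k) {u : ℝ} (hu : u ∈ Icc 0 1) :
    (n : ℝ) + u ∈ Icc (0 : ℝ) k := by
  have : (n : ℝ) + 1 ≤ k := by exact_mod_cast hn
  exact ⟨by linarith [hu.1, n.cast_nonneg (α := ℝ)], by linarith [hu.2]⟩

section phiBN

variable {α β α' β' : ℝ}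

lemma phiBN_mem_Icc (hβ : 0 < β) : ∀ n x, phiBN α β n x ∈ Icc 0 1
  | 0, _ => ⟨le_rfl, zero_le_one⟩
  | _ + 1, _ => phiB_mem_Icc hβ _

lemma phiBN_monotone (hβ : 0 < β) (x : ℕ → ℕ) : Monotone fun n => phiBN α β n x := by
  refine monotone_nat_of_le_succ fun n => ?_
  induction n generalizing x with
  | zero => exact (phiB_mem_Icc hβ _).1
  | succ n ih => exact phiB_monotone hβ (add_le_add_right (ih (shft x)) _)

lemma tendsto_phiBN (hβ : 0 < β) (x : ℕ → ℕ) :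
    Tendsto (fun n => phiBN α β n x) atTop (𝓝 (phiBInf α β x)) :=
  tendsto_atTop_ciSup (phiBN_monotone hβ x)
    ⟨1, by rintro _ ⟨n, rfl⟩; exact (phiBN_mem_Icc hβ n x).2⟩

lemma phiBInf_mem_Icc (hβ : 0 < β) (x : ℕ → ℕ) : phiBInf α β x ∈ Icc 0 1 :=
  isClosed_Icc.mem_of_tendsto (tendsto_phiBN hβ x) (Eventually.of_forall (phiBN_mem_Icc hβ · x))

lemma phiBInf_eq_phiB (hβ : 0 < β) (x : ℕ → ℕ) :
    phiBInf α β x = phiB α β (x 0 + phiBInf α β (shft x)) := by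
  have hsucc := (tendsto_add_atTop_iff_nat 1).2 (tendsto_phiBN (α := α) hβ x)
  have hlim := ((continuous_phiB (α := α) hβ).tendsto _).comp
    ((tendsto_phiBN (α := α) hβ (shft x)).const_add (x 0 : ℝ))
  exact tendsto_nhds_unique hsucc hlim

lemma phiBN_le_phiBN_of_dominates {k : ℕ} (hβ : 0 < β) (hβ' : 0 < β')
    (hdom : ∀ t ∈ Icc (0 : ℝ) k, phiB α' β' t ≤ phiB α β t) (n : ℕ) {x : ℕ → ℕ}
    (hx : ∀ i, x i < k) : phiBN α' β' n x ≤ phiBN α β n x := by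
  induction n generalizing x with
  | zero => exact le_rfl
  | succ n ih =>
    calc phiB α' β' (x 0 + phiBN α' β' n (shft x))
        ≤ phiB α' β' (x 0 + phiBN α β n (shft x)) :=
          phiB_monotone hβ' (add_le_add_right (ih fun i => hx (i + 1)) _)
      _ ≤ phiB α β (x 0 + phiBN α β n (shft x)) :=
          hdom _ (natCast_add_mem_Icc (hx 0) (phiBN_mem_Icc hβ n _))

lemma phiBInf_le_phiBInf_of_dominates {k : ℕ} (hβ : 0 < β) (hβ' : 0 < β')
    (hdom : ∀ t ∈ Icc (0 : ℝ) k, phiB α' β' t ≤ phiB α β t) {x : ℕ → ℕ}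
    (hx : ∀ i, x i < k) : phiBInf α' β' x ≤ phiBInf α β x :=
  le_of_tendsto_of_tendsto' (tendsto_phiBN hβ' x) (tendsto_phiBN hβ x)
    fun n => phiBN_le_phiBN_of_dominates hβ hβ' hdom n hx

end phiBN

theorem phiInf_monotone_of_dominates_general (k : ℕ) (α β α' β' : ℝ)
    (hα : α ∈ Set.Icc (0 : ℝ) 1)
    (hβ : 1 ≤ β) (hβ' : 1 ≤ β')
    (hγ : α + β - k + 1 ∈ Set.Icc (0 : ℝ) 1)
    (hdom : ∀ t ∈ Set.Icc (0 : ℝ) (k : ℝ), phiB α' β' t ≤ phiB α β t)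
    (hstrict : ∃ s ∈ Set.Icc (0 : ℝ) (k : ℝ), phiB α' β' s < phiB α β s) :
    ∀ x : ℕ → ℕ, (∀ i, x i < k) →
      phiBInf α' β' x ≤ phiBInf α β x ∧
      (((0 < phiBInf α β x ∧ phiBInf α β x < 1) ∨
        (0 < phiBInf α' β' x ∧ phiBInf α' β' x < 1)) →
        phiBInf α' β' x < phiBInf α β x) := by
  intro x hx
  have hb : 0 < β := by linarith
  have hb' : 0 < β' := by linarith
  refine ⟨phiBInf_le_phiBInf_of_dominates hb hb' hdom hx, fun hcase => ?_⟩
  have hshift : ∀ i, shft x i < k := fun i => hx (i + 1)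
  have hαk : α + β ≤ k := by linarith [hγ.2]
  rw [phiBInf_eq_phiB hb x, phiBInf_eq_phiB hb' x] at hcase ⊢
  set t := (x 0 : ℝ) + phiBInf α β (shft x)
  set t' := (x 0 : ℝ) + phiBInf α' β' (shft x)
  have ht't : t' ≤ t := add_le_add_right (phiBInf_le_phiBInf_of_dominates hb hb' hdom hshift) _
  rcases hcase with hcase | hcase
  · calc phiB α' β' t' ≤ phiB α' β' t := phiB_monotone hb' ht't
      _ < phiB α β t := phiB_lt_phiB_of_dominates hα.1 hαk hb hb' hdom hstrict
          (natCast_add_mem_Icc (hx 0) (phiBInf_mem_Icc hb _)) (.inl hcase)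
  · calc phiB α' β' t' < phiB α β t' :=
          phiB_lt_phiB_of_dominates hα.1 hαk hb hb' hdom hstrict
            (natCast_add_mem_Icc (hx 0) (phiBInf_mem_Icc hb' _)) (.inr hcase)
      _ ≤ phiB α β t := phiB_monotone hb ht't

/-- **Monotonicity of `φ̄_∞` under domination.** Let `k ≥ 2` and suppose
`α, α′ ∈ [0,1]`, `β, β′ ≥ 1`, `α+β−k+1 ∈ [0,1]`, `α′+β′−k+1 ∈ [0,1]`, and
`φ̄^{α,β}` dominates `φ̄^{α′,β′}` (i.e. `φ̄^{α,β}(t) ≥ φ̄^{α′,β′}(t)` on `[0,k]`, with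
strict inequality somewhere). Then `φ̄_∞^{α,β}(x) ≥ φ̄_∞^{α′,β′}(x)` for every
`x ∈ A^ℕ`, with strict inequality whenever `0 < φ̄_∞^{α,β}(x) < 1` or
`0 < φ̄_∞^{α′,β′}(x) < 1`. -/
theorem phiInf_monotone_of_dominates (k : ℕ) (hk : 2 ≤ k) (α β α' β' : ℝ)
    (hα : α ∈ Set.Icc (0 : ℝ) 1) (hα' : α' ∈ Set.Icc (0 : ℝ) 1)
    (hβ : 1 ≤ β) (hβ' : 1 ≤ β')
    (hγ : α + β - k + 1 ∈ Set.Icc (0 : ℝ) 1)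
    (hγ' : α' + β' - k + 1 ∈ Set.Icc (0 : ℝ) 1)
    (hdom : ∀ t ∈ Set.Icc (0 : ℝ) (k : ℝ), phiB α' β' t ≤ phiB α β t)
    (hstrict : ∃ s ∈ Set.Icc (0 : ℝ) (k : ℝ), phiB α' β' s < phiB α β s) :
    ∀ x : ℕ → ℕ, (∀ i, x i < k) →
      phiBInf α' β' x ≤ phiBInf α β x ∧
      (((0 < phiBInf α β x ∧ phiBInf α β x < 1) ∨
        (0 < phiBInf α' β' x ∧ phiBInf α' β' x < 1)) →
        phiBInf α' β' x < phiBInf α β x) :=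
  phiInf_monotone_of_dominates_general k α β α' β' hα hβ hβ' hγ hdom hstrict
end

section
/- Follower sets of the shift space Σ(u,v). Let k ≥ 2 and let u, v ∈ A^ℕ satisfy u₀ = 0, v₀ = k−1, and u ≼ σⁿu ≼ v and u ≼ σⁿv ≼ v for all n ≥ 0. Let w be a finite word over A that is a prefix of some element of Σ(u,v); let p be the length of the longest suffix u(w) of w that is a prefix of u, and q the length of the longest suffix v(w) of w that is a prefix of v. Then {x ∈ Σ(u,v) : w is a prefix of x} = {w⌢y : y ∈ Σ(u,v) and σᵖu ≼ y ≼ σᵠv}, where ⌢ denotes concatenation. Moreover, setting F_w := {y ∈ Σ(u,v) : w⌢y ∈ Σ(u,v)}: if p > q then F_w = F_{u(w)}, and if q > p then F_w = F_{v(w)}. -/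
/-!
Write `z = w ⌢ y`. For `n ≥ N` the constraints on `σⁿz` are those on `y`. For `n < N`, a point
`x ∈ Σ(u,v)` extending `w` gives `u ≺ σⁿz` already inside `w`, unless `wₙ ⋯ w_{N-1}` is a prefix
of `u`. Then it is a suffix of `u(w)`, so `σⁿz` starts like `σ^{p-(N-n)}u`, and
`u ≼ σ^{p-(N-n)}u ≼ σⁿz` follows from `σᵖu ≼ y`. The upper bound by `v` is the same argument for
the reversed order, and the positions `n = N - p`, `N - q` show that the bounds on `y` are
necessary. Since `u(w)` has the same `p` and `q` as `w` when `q < p`, the two follower sets are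
described by the same bounds (and symmetrically for `v(w)`).
-/

open Filter Set

open Function

lemma shft_iterate_apply (n : ℕ) (x : ℕ → ℕ) (i : ℕ) : shft^[n] x i = x (n + i) := by
  induction n generalizing x with
  | zero => simp
  | succ n ih => rw [iterate_succ_apply, ih, shft, Nat.succ_add]

lemma shft_iterate_wcat_of_le {n N : ℕ} (w y : ℕ → ℕ) (h : N ≤ n) :
    shft^[n] (wcat N w y) = shft^[n - N] y := by
  funext i
  simp only [shft_iterate_apply, wcat, if_neg (show ¬ n + i < N by omega)]
  congr 1
  omega

lemma shft_iterate_wcat (N : ℕ) (w y : ℕ → ℕ) : shft^[N] (wcat N w y) = y := by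
  rw [shft_iterate_wcat_of_le w y le_rfl, Nat.sub_self, iterate_zero_apply]

lemma wcat_shft_iterate {N : ℕ} {w x : ℕ → ℕ} (h : ∀ i, i < N → x i = w i) :
    wcat N w (shft^[N] x) = x := by
  funext i
  by_cases hi : i < N
  · simp [wcat, hi, h i hi]
  · simp only [wcat, hi, if_false, shft_iterate_apply]
    congr 1
    omega

lemma lexLe_iff_toLex_le {x y : ℕ → ℕ} : lexLe x y ↔ toLex x ≤ toLex y := by
  rw [le_iff_eq_or_lt]
  rfl

lemma lexLe_trans {x y z : ℕ → ℕ} (hxy : lexLe x y) (hyz : lexLe y z) : lexLe x z := by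
  rw [lexLe_iff_toLex_le] at *
  exact hxy.trans hyz

lemma lexLe_iff_shft_iterate {l : ℕ} {a b : ℕ → ℕ} (h : ∀ i, i < l → a i = b i) :
    lexLe a b ↔ lexLe (shft^[l] a) (shft^[l] b) := by
  simp only [lexLe, lexLt, funext_iff, shft_iterate_apply]
  constructor
  · rintro (hab | ⟨m, hm, hlt⟩)
    · exact Or.inl fun i => hab _
    · have hlm : l ≤ m := by
        by_contra! hml
        exact hlt.ne (h m hml)
      refine Or.inr ⟨m - l, fun i hi => hm _ (by omega), ?_⟩
      rwa [Nat.add_sub_cancel' hlm]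
  · rintro (hab | ⟨m, hm, hlt⟩)
    · refine Or.inl fun i => ?_
      rcases lt_or_ge i l with hil | hil
      · exact h i hil
      · simpa [Nat.add_sub_cancel' hil] using hab (i - l)
    · refine Or.inr ⟨l + m, fun i hi => ?_, hlt⟩
      rcases lt_or_ge i l with hil | hil
      · exact h i hil
      · simpa [Nat.add_sub_cancel' hil] using hm (i - l) (by omega)

lemma lexLe_agree_or {l : ℕ} {a b c : ℕ → ℕ} (hab : lexLe a b) (hbc : ∀ i, i < l → b i = c i) :
    (∀ i, i < l → a i = b i) ∨ lexLe a c := by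
  rcases hab with rfl | ⟨m, hm, hlt⟩
  · exact Or.inl fun _ _ => rfl
  by_cases hml : m < l
  · exact Or.inr <| Or.inr
      ⟨m, fun i hi => (hm i hi).trans (hbc i (hi.trans hml)), hlt.trans_eq (hbc m hml)⟩
  · exact Or.inl fun i hi => hm i (by omega)

lemma lexLe_swap_agree_or {l : ℕ} {a b c : ℕ → ℕ} (hba : lexLe b a)
    (hbc : ∀ i, i < l → b i = c i) : (∀ i, i < l → a i = b i) ∨ lexLe c a := by
  rcases hba with rfl | ⟨m, hm, hlt⟩
  · exact Or.inl fun _ _ => rfl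
  by_cases hml : m < l
  · exact Or.inr <| Or.inr
      ⟨m, fun i hi => (hbc i (hi.trans hml)).symm.trans (hm i hi), (hbc m hml).symm.trans_lt hlt⟩
  · exact Or.inl fun i hi => (hm i (by omega)).symm

/-- The properties of `≼` that the follower-set argument uses. The reversed order `≽` has them
too, so a single argument gives both the lower bound by `u` and the upper bound by `v`. -/
structure IsPrefixCompatible (R : (ℕ → ℕ) → (ℕ → ℕ) → Prop) : Prop where
  trans {a b c : ℕ → ℕ} : R a b → R b c → R a c
  iff_shft_iterate {l : ℕ} {a b : ℕ → ℕ} :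
    (∀ i, i < l → a i = b i) → (R a b ↔ R (shft^[l] a) (shft^[l] b))
  agree_or {l : ℕ} {a b c : ℕ → ℕ} :
    R a b → (∀ i, i < l → b i = c i) → (∀ i, i < l → a i = b i) ∨ R a c

lemma isPrefixCompatible_lexLe : IsPrefixCompatible lexLe where
  trans := lexLe_trans
  iff_shft_iterate := lexLe_iff_shft_iterate
  agree_or := lexLe_agree_or

lemma isPrefixCompatible_swap_lexLe : IsPrefixCompatible fun a b => lexLe b a where
  trans hab hbc := lexLe_trans hbc hab
  iff_shft_iterate h := lexLe_iff_shft_iterate fun i hi => (h i hi).symm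
  agree_or := lexLe_swap_agree_or

structure IsLongestSuffixPrefix (u : ℕ → ℕ) (N : ℕ) (w : ℕ → ℕ) (p : ℕ) : Prop where
  le : p ≤ N
  suffix_eq : ∀ i, i < p → w (N - p + i) = u i
  le_of_suffix_eq : ∀ l, l ≤ N → (∀ i, i < l → w (N - l + i) = u i) → l ≤ p

namespace IsLongestSuffixPrefix

lemma self (u : ℕ → ℕ) (p : ℕ) : IsLongestSuffixPrefix u p u p where
  le := le_rfl
  suffix_eq i _ := by rw [Nat.sub_self, zero_add]
  le_of_suffix_eq _ hl _ := hl

/-- As `u₀ ⋯ u_{p-1}` is a suffix of `w`, its suffixes of length `≤ p` are those of `w`. -/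
lemma of_suffix {u v w : ℕ → ℕ} {N p q : ℕ} (hp : IsLongestSuffixPrefix u N w p)
    (hq : IsLongestSuffixPrefix v N w q) (hqp : q ≤ p) : IsLongestSuffixPrefix v p u q := by
  have hsuffix : ∀ l, l ≤ p → ∀ i, i < l → u (p - l + i) = w (N - l + i) := fun l hl i hi => by
    have := hp.le
    rw [← hp.suffix_eq _ (by omega)]
    congr 1
    omega
  exact ⟨hqp, fun i hi => (hsuffix q hqp i hi).trans (hq.suffix_eq i hi), fun l hl h =>
    hq.le_of_suffix_eq l (hl.trans hp.le) fun i hi => (hsuffix l hl i hi).symm.trans (h i hi)⟩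

end IsLongestSuffixPrefix

namespace IsPrefixCompatible

variable {R : (ℕ → ℕ) → (ℕ → ℕ) → Prop} {u x w y : ℕ → ℕ} {N p : ℕ}

lemma shft_iterate_wcat_of_lt (hR : IsPrefixCompatible R) (hu : ∀ n, R u (shft^[n] u))
    (hx : ∀ n, R u (shft^[n] x)) (hxw : ∀ i, i < N → x i = w i)
    (hp : IsLongestSuffixPrefix u N w p) (hpy : R (shft^[p] u) y) {n : ℕ} (hn : n < N) :
    R u (shft^[n] (wcat N w y)) := by
  have hwx : ∀ i, i < N - n → shft^[n] x i = shft^[n] (wcat N w y) i := fun i hi => by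
    rw [shft_iterate_apply, shft_iterate_apply, wcat, if_pos (by omega), hxw _ (by omega)]
  rcases hR.agree_or (hx n) hwx with hux | hlt
  · have hl : N - n ≤ p := hp.le_of_suffix_eq _ (by omega) fun i hi => by
      rw [hux i hi, shft_iterate_apply, hxw _ (by omega)]
      congr 1
      omega
    have hagree : ∀ i, i < N - n → shft^[p - (N - n)] u i = shft^[n] (wcat N w y) i :=
      fun i hi => by
        have := hp.le
        rw [shft_iterate_apply, shft_iterate_apply, wcat, if_pos (by omega),
          ← hp.suffix_eq _ (by omega)]
        congr 1
        omega
    refine hR.trans (hu (p - (N - n))) ((hR.iff_shft_iterate hagree).2 ?_)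
    rwa [← iterate_add_apply, ← iterate_add_apply, Nat.add_sub_cancel' hl,
      Nat.sub_add_cancel hn.le, shft_iterate_wcat]
  · exact hlt

lemma forall_shft_iterate_wcat_iff (hR : IsPrefixCompatible R) (hu : ∀ n, R u (shft^[n] u))
    (hx : ∀ n, R u (shft^[n] x)) (hxw : ∀ i, i < N → x i = w i)
    (hp : IsLongestSuffixPrefix u N w p) (hy : ∀ n, R u (shft^[n] y)) :
    (∀ n, R u (shft^[n] (wcat N w y))) ↔ R (shft^[p] u) y := by
  refine ⟨fun h => ?_, fun hpy n => ?_⟩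
  · have hagree : ∀ i, i < p → u i = shft^[N - p] (wcat N w y) i := fun i hi => by
      have := hp.le
      rw [shft_iterate_apply, wcat, if_pos (by omega), hp.suffix_eq i hi]
    simpa only [← iterate_add_apply, Nat.add_sub_cancel' hp.le, shft_iterate_wcat]
      using (hR.iff_shft_iterate hagree).1 (h (N - p))
  · rcases lt_or_ge n N with hn | hn
    · exact hR.shft_iterate_wcat_of_lt hu hx hxw hp hpy hn
    · rw [shft_iterate_wcat_of_le w y hn]
      exact hy _

end IsPrefixCompatible

section SigSet

variable {k N p q : ℕ} {u v w : ℕ → ℕ}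

lemma shft_iterate_mem_sigSet {x : ℕ → ℕ} (hx : x ∈ SigSet k u v) (n : ℕ) :
    shft^[n] x ∈ SigSet k u v :=
  ⟨fun i => shft_iterate_apply n x i ▸ hx.1 _, fun m => iterate_add_apply shft m n x ▸ hx.2 (m + n)⟩

lemma wcat_mem_sigSet_iff (hu : ∀ n, lexLe u (shft^[n] u)) (hv : ∀ n, lexLe (shft^[n] v) v)
    (hw : ∃ x ∈ SigSet k u v, ∀ i, i < N → x i = w i)
    (hp : IsLongestSuffixPrefix u N w p) (hq : IsLongestSuffixPrefix v N w q)
    {y : ℕ → ℕ} (hy : y ∈ SigSet k u v) :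
    wcat N w y ∈ SigSet k u v ↔ lexLe (shft^[p] u) y ∧ lexLe y (shft^[q] v) := by
  obtain ⟨x, hx, hxw⟩ := hw
  have hletters : ∀ i, wcat N w y i < k := fun i => by
    by_cases hi : i < N
    · rw [wcat, if_pos hi, ← hxw i hi]
      exact hx.1 i
    · rw [wcat, if_neg hi]
      exact hy.1 _
  simp only [SigSet, mem_ofPred_eq, forall_and, hletters, implies_true, true_and]
  exact and_congr
    (isPrefixCompatible_lexLe.forall_shft_iterate_wcat_iff hu (fun n => (hx.2 n).1) hxw hp
      fun n => (hy.2 n).1)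
    (isPrefixCompatible_swap_lexLe.forall_shft_iterate_wcat_iff hv (fun n => (hx.2 n).2) hxw hq
      fun n => (hy.2 n).2)

lemma setOf_mem_sigSet_prefix_eq (hu : ∀ n, lexLe u (shft^[n] u))
    (hv : ∀ n, lexLe (shft^[n] v) v) (hw : ∃ x ∈ SigSet k u v, ∀ i, i < N → x i = w i)
    (hp : IsLongestSuffixPrefix u N w p) (hq : IsLongestSuffixPrefix v N w q) :
    {x | x ∈ SigSet k u v ∧ ∀ i, i < N → x i = w i} =
      {z | ∃ y ∈ SigSet k u v, lexLe (shft^[p] u) y ∧ lexLe y (shft^[q] v) ∧ z = wcat N w y} := by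
  ext x
  constructor
  · rintro ⟨hx, hxw⟩
    have hy := shft_iterate_mem_sigSet hx N
    rw [← wcat_shft_iterate hxw, wcat_mem_sigSet_iff hu hv hw hp hq hy] at hx
    exact ⟨_, hy, hx.1, hx.2, (wcat_shft_iterate hxw).symm⟩
  · rintro ⟨y, hy, hpy, hyq, rfl⟩
    exact ⟨(wcat_mem_sigSet_iff hu hv hw hp hq hy).2 ⟨hpy, hyq⟩, fun i hi => if_pos hi⟩

lemma setOf_wcat_mem_sigSet_eq {N' : ℕ} {w' : ℕ → ℕ} (hu : ∀ n, lexLe u (shft^[n] u))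
    (hv : ∀ n, lexLe (shft^[n] v) v) (hw : ∃ x ∈ SigSet k u v, ∀ i, i < N → x i = w i)
    (hw' : ∃ x ∈ SigSet k u v, ∀ i, i < N' → x i = w' i)
    (hp : IsLongestSuffixPrefix u N w p) (hq : IsLongestSuffixPrefix v N w q)
    (hp' : IsLongestSuffixPrefix u N' w' p) (hq' : IsLongestSuffixPrefix v N' w' q) :
    {y | y ∈ SigSet k u v ∧ wcat N w y ∈ SigSet k u v} =
      {y | y ∈ SigSet k u v ∧ wcat N' w' y ∈ SigSet k u v} := by
  ext y
  exact and_congr_right fun hy =>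
    (wcat_mem_sigSet_iff hu hv hw hp hq hy).trans (wcat_mem_sigSet_iff hu hv hw' hp' hq' hy).symm

end SigSet

theorem follower_sets_general (k : ℕ) (u v : ℕ → ℕ)
    (hu : ∀ i, u i < k) (hv : ∀ i, v i < k)
    (hcond : ∀ n, lexLe u (shft^[n] u) ∧ lexLe (shft^[n] u) v ∧
                  lexLe u (shft^[n] v) ∧ lexLe (shft^[n] v) v)
    (N : ℕ) (w : ℕ → ℕ)
    (hwlang : ∃ x ∈ SigSet k u v, ∀ i, i < N → x i = w i)
    (p : ℕ) (hpN : p ≤ N)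
    (hpsuf : ∀ i, i < p → w (N - p + i) = u i)
    (hpmax : ∀ l, l ≤ N → (∀ i, i < l → w (N - l + i) = u i) → l ≤ p)
    (q : ℕ) (hqN : q ≤ N)
    (hqsuf : ∀ i, i < q → w (N - q + i) = v i)
    (hqmax : ∀ l, l ≤ N → (∀ i, i < l → w (N - l + i) = v i) → l ≤ q) :
    ({x | x ∈ SigSet k u v ∧ ∀ i, i < N → x i = w i} =
      {z | ∃ y ∈ SigSet k u v,
        lexLe (shft^[p] u) y ∧ lexLe y (shft^[q] v) ∧ z = wcat N w y}) ∧
    (q < p →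
      {y | y ∈ SigSet k u v ∧ wcat N w y ∈ SigSet k u v} =
      {y | y ∈ SigSet k u v ∧ wcat p u y ∈ SigSet k u v}) ∧
    (p < q →
      {y | y ∈ SigSet k u v ∧ wcat N w y ∈ SigSet k u v} =
      {y | y ∈ SigSet k u v ∧ wcat q v y ∈ SigSet k u v}) := by
  have hp : IsLongestSuffixPrefix u N w p := ⟨hpN, hpsuf, hpmax⟩
  have hq : IsLongestSuffixPrefix v N w q := ⟨hqN, hqsuf, hqmax⟩
  have hu_le : ∀ n, lexLe u (shft^[n] u) := fun n => (hcond n).1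
  have hv_ge : ∀ n, lexLe (shft^[n] v) v := fun n => (hcond n).2.2.2
  have hu_mem : u ∈ SigSet k u v := ⟨hu, fun n => ⟨(hcond n).1, (hcond n).2.1⟩⟩
  have hv_mem : v ∈ SigSet k u v := ⟨hv, fun n => ⟨(hcond n).2.2.1, (hcond n).2.2.2⟩⟩
  refine ⟨setOf_mem_sigSet_prefix_eq hu_le hv_ge hwlang hp hq, fun hqp => ?_, fun hpq => ?_⟩
  · exact setOf_wcat_mem_sigSet_eq hu_le hv_ge hwlang ⟨u, hu_mem, fun _ _ => rfl⟩ hp hq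
      (.self u p) (hp.of_suffix hq hqp.le)
  · exact setOf_wcat_mem_sigSet_eq hu_le hv_ge hwlang ⟨v, hv_mem, fun _ _ => rfl⟩ hp hq
      (hq.of_suffix hp hpq.le) (.self v q)

/-- **Follower sets of the shift space `Σ(u,v)`.** Let `k ≥ 2`, `u, v ∈ A^ℕ` with
`u₀ = 0`, `v₀ = k−1` and `u ≼ σⁿu ≼ v`, `u ≼ σⁿv ≼ v` for all `n ≥ 0`. Let `w` be a
word of length `N` in the language of `Σ(u,v)`, let `p` be the length of the longest
suffix of `w` that is a prefix of `u`, and `q` the length of the longest suffix of `w`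
that is a prefix of `v`. Then
`{x ∈ Σ(u,v) : w prefix of x} = {w ⌢ y : y ∈ Σ(u,v), σᵖu ≼ y ≼ σ^q v}`; moreover,
with `F_w := {y ∈ Σ(u,v) : w ⌢ y ∈ Σ(u,v)}`: if `p > q` then `F_w = F_{u(w)}`, and if
`q > p` then `F_w = F_{v(w)}` (where `u(w)`, `v(w)` are the above suffixes, i.e. the
prefixes of `u`, `v` of lengths `p`, `q`). -/
theorem follower_sets (k : ℕ) (hk : 2 ≤ k) (u v : ℕ → ℕ)
    (hu : ∀ i, u i < k) (hv : ∀ i, v i < k)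
    (hu0 : u 0 = 0) (hv0 : v 0 = k - 1)
    (hcond : ∀ n, lexLe u (shft^[n] u) ∧ lexLe (shft^[n] u) v ∧
                  lexLe u (shft^[n] v) ∧ lexLe (shft^[n] v) v)
    (N : ℕ) (w : ℕ → ℕ)
    (hwlang : ∃ x ∈ SigSet k u v, ∀ i, i < N → x i = w i)
    (p : ℕ) (hpN : p ≤ N)
    (hpsuf : ∀ i, i < p → w (N - p + i) = u i)
    (hpmax : ∀ l, l ≤ N → (∀ i, i < l → w (N - l + i) = u i) → l ≤ p)
    (q : ℕ) (hqN : q ≤ N)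
    (hqsuf : ∀ i, i < q → w (N - q + i) = v i)
    (hqmax : ∀ l, l ≤ N → (∀ i, i < l → w (N - l + i) = v i) → l ≤ q) :
    ({x | x ∈ SigSet k u v ∧ ∀ i, i < N → x i = w i} =
      {z | ∃ y ∈ SigSet k u v,
        lexLe (shft^[p] u) y ∧ lexLe y (shft^[q] v) ∧ z = wcat N w y}) ∧
    (q < p →
      {y | y ∈ SigSet k u v ∧ wcat N w y ∈ SigSet k u v} =
      {y | y ∈ SigSet k u v ∧ wcat p u y ∈ SigSet k u v}) ∧
    (p < q →
      {y | y ∈ SigSet k u v ∧ wcat N w y ∈ SigSet k u v} =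
      {y | y ∈ SigSet k u v ∧ wcat q v y ∈ SigSet k u v}) :=
  follower_sets_general k u v hu hv hcond N w hwlang p hpN hpsuf hpmax q hqN hqsuf hqmax
end
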